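/- Let 0 < p < 1 and let A be an invertible n×n real matrix with Σ_k |a_{ki}|^p = 1 for every column i, Σ_k |a_{ki} + a_{kj}|^p = 2 and Σ_k |a_{ki} − a_{kj}|^p = 2 for all i ≠ j. Then each row of A has at most one nonzero entry, and hence A is a generalized permutation matrix. -/

import Mathlib

private lemma rpow_subadd_strict {p x y : ℝ} (hp0 : 0 < p) (hp1 : p < 1)
    (hx : 0 < x) (hy : 0 < y) : (x + y) ^ p < x ^ p + y ^ p := by
  have hs : 0 < x + y := by linarith
  have hx1 : x / (x + y) < 1 := (div_lt_one hs).2 (by linarith)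
  have hy1 : y / (x + y) < 1 := (div_lt_one hs).2 (by linarith)
  have h1 : x / (x + y) < (x / (x + y)) ^ p := by
    have := Real.rpow_lt_rpow_of_exponent_gt (by positivity) hx1 hp1
    simpa [Real.rpow_one] using this
  have h2 : y / (x + y) < (y / (x + y)) ^ p := by
    have := Real.rpow_lt_rpow_of_exponent_gt (by positivity) hy1 hp1
    simpa [Real.rpow_one] using this
  have hone : x / (x + y) + y / (x + y) = 1 := by field_simp
  have key : 1 < (x / (x + y)) ^ p + (y / (x + y)) ^ p := by linarith
  rw [Real.div_rpow hx.le hs.le, Real.div_rpow hy.le hs.le, ← add_div,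
    lt_div_iff₀ (Real.rpow_pos_of_pos hs p), one_mul] at key
  exact key

private lemma rpow_subadd {p x y : ℝ} (hp0 : 0 < p) (hp1 : p < 1)
    (hx : 0 ≤ x) (hy : 0 ≤ y) : (x + y) ^ p ≤ x ^ p + y ^ p := by
  rcases hx.eq_or_lt with h | h
  · simp [← h, Real.zero_rpow hp0.ne', Real.rpow_natCast]
  rcases hy.eq_or_lt with h' | h'
  · simp [← h', Real.zero_rpow hp0.ne']
  exact (rpow_subadd_strict hp0 hp1 h h').le

private lemma abs_rpow_subadd {p : ℝ} (hp0 : 0 < p) (hp1 : p < 1) (a b : ℝ) :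
    |a + b| ^ p ≤ |a| ^ p + |b| ^ p :=
  le_trans (Real.rpow_le_rpow (abs_nonneg _) (abs_add_le a b) hp0.le)
    (rpow_subadd hp0 hp1 (abs_nonneg a) (abs_nonneg b))

private lemma abs_rpow_subadd_strict {p : ℝ} (hp0 : 0 < p) (hp1 : p < 1) {a b : ℝ}
    (ha : a ≠ 0) (hb : b ≠ 0) : |a + b| ^ p < |a| ^ p + |b| ^ p := by
  rcases (abs_add_le a b).eq_or_lt with h | h
  · rw [h]
    exact rpow_subadd_strict hp0 hp1 (abs_pos.2 ha) (abs_pos.2 hb)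
  · exact lt_of_lt_of_le (Real.rpow_lt_rpow (abs_nonneg _) h hp0)
      (rpow_subadd hp0 hp1 (abs_nonneg a) (abs_nonneg b))

/-- If an invertible matrix has unit column ℓ^p mass and
`∑_k |a_{ki} ± a_{kj}|^p = 2` for all `i ≠ j` (with `0 < p < 1`), then each row
has at most one nonzero entry, and hence `A` is a generalized permutation
matrix. -/
theorem column_conditions_give_generalized_permutation {n : ℕ}
    (A : Matrix (Fin n) (Fin n) ℝ) (hA : IsUnit A)
    (p : ℝ) (hp0 : 0 < p) (hp1 : p < 1)
    (hcol : ∀ i : Fin n, ∑ k, |A k i| ^ p = 1)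
    (hsum : ∀ i j : Fin n, i ≠ j → ∑ k, |A k i + A k j| ^ p = 2)
    (hdiff : ∀ i j : Fin n, i ≠ j → ∑ k, |A k i - A k j| ^ p = 2) :
    (∀ k i j : Fin n, A k i ≠ 0 → A k j ≠ 0 → i = j) ∧
    (∀ i : Fin n, ∃! j : Fin n, A i j ≠ 0) ∧
    (∀ j : Fin n, ∃! i : Fin n, A i j ≠ 0) := by
  have part1 : ∀ k i j : Fin n, A k i ≠ 0 → A k j ≠ 0 → i = j := by
    intro k i j hki hkj
    by_contra hij
    have hdiffle : ∀ m : Fin n, |A m i - A m j| ^ p ≤ |A m i| ^ p + |A m j| ^ p := by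
      intro m
      have := abs_rpow_subadd hp0 hp1 (A m i) (-(A m j))
      simpa [sub_eq_add_neg] using this
    have hle : ∀ m ∈ Finset.univ, |A m i + A m j| ^ p + |A m i - A m j| ^ p ≤
        2 * (|A m i| ^ p + |A m j| ^ p) := by
      intro m _
      have h1 := abs_rpow_subadd hp0 hp1 (A m i) (A m j)
      have h2 := hdiffle m
      linarith
    have hlt : |A k i + A k j| ^ p + |A k i - A k j| ^ p <
        2 * (|A k i| ^ p + |A k j| ^ p) := by
      have h1 := abs_rpow_subadd_strict hp0 hp1 hki hkj
      have h2 := hdiffle k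
      linarith
    have hsl := Finset.sum_lt_sum hle ⟨k, Finset.mem_univ k, hlt⟩
    rw [Finset.sum_add_distrib, hsum i j hij, hdiff i j hij, ← Finset.mul_sum,
      Finset.sum_add_distrib, hcol i, hcol j] at hsl
    linarith
  have row_ne : ∀ k : Fin n, ∃ j, A k j ≠ 0 := by
    intro k
    by_contra h
    push_neg at h
    have hdet : A.det = 0 := Matrix.det_eq_zero_of_row_eq_zero k h
    have := (Matrix.isUnit_iff_isUnit_det A).1 hA
    rw [hdet] at this
    exact not_isUnit_zero this
  have col_ne : ∀ j : Fin n, ∃ k, A k j ≠ 0 := by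
    intro j
    by_contra h
    push_neg at h
    have : ∑ k, |A k j| ^ p = 0 := by
      apply Finset.sum_eq_zero
      intro k _
      simp [h k, Real.zero_rpow hp0.ne']
    rw [hcol j] at this
    norm_num at this
  have rowEU : ∀ i : Fin n, ∃! j : Fin n, A i j ≠ 0 := by
    intro i
    obtain ⟨j, hj⟩ := row_ne i
    exact ⟨j, hj, fun j' hj' => part1 i j' j hj' hj⟩
  set f : Fin n → Fin n := fun k => (rowEU k).choose with hf
  have hfspec : ∀ k, A k (f k) ≠ 0 := fun k => (rowEU k).choose_spec.1
  have hfsurj : Function.Surjective f := by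
    intro j
    obtain ⟨k, hk⟩ := col_ne j
    exact ⟨k, part1 k (f k) j (hfspec k) hk⟩
  have hfinj : Function.Injective f := Finite.injective_iff_surjective.2 hfsurj
  refine ⟨part1, rowEU, fun j => ?_⟩
  obtain ⟨k, hk⟩ := col_ne j
  refine ⟨k, hk, fun i' hi' => ?_⟩
  have h1 : f i' = j := part1 i' (f i') j (hfspec i') hi'
  have h2 : f k = j := part1 k (f k) j (hfspec k) hk
  exact hfinj (h1.trans h2.symm)
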